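/- arXiv:1101.5032 — 5 statements merged into one kernel-verified Lean document; each statement's English description precedes it below -/
import Mathlib

section
/- Let α be a badly approximable real number: there is γ > 1 with ‖αx‖ ≥ 1/(γx) for all positive integers x. Let η be any real number. Then for all positive integers ν and μ, the cardinality of A_{ν,μ} = {x ∈ ℤ₊ : 2^ν ≤ x < 2^{ν+1}, 2^{−μ−1} < ‖αx − η‖ ≤ 2^{−μ}} satisfies card A_{ν,μ} ≤ 8·max(√(γ·2^{ν−μ+1}), 2^{ν−μ}, 1). -/
/-- Distance from a real number to the nearest integer. -/
noncomputable def dni (t : ℝ) : ℝ := |t - round t|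

lemma dni_le (t : ℝ) (m : ℤ) : dni t ≤ |t - m| := by
  rcases eq_or_ne m (round t) with h | h
  · simp [dni, h]
  · have h0 : (1:ℤ) ≤ |m - round t| := Int.one_le_abs (sub_ne_zero.mpr h)
    have h1 : (1:ℝ) ≤ |(m:ℝ) - ((round t : ℤ):ℝ)| := by
      have : ((1:ℤ):ℝ) ≤ ((|m - round t| : ℤ) : ℝ) := by exact_mod_cast h0
      push_cast at this
      convert this using 2
    have h2 : |t - ((round t : ℤ):ℝ)| ≤ 1/2 := abs_sub_round t
    have h3 : |(m:ℝ) - ((round t:ℤ):ℝ)| ≤ |(m:ℝ) - t| + |t - ((round t:ℤ):ℝ)| := by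
      have := abs_add_le ((m:ℝ) - t) (t - ((round t:ℤ):ℝ))
      simpa using this
    have h4 : |t - (m:ℝ)| = |(m:ℝ) - t| := abs_sub_comm _ _
    unfold dni
    rw [h4]
    linarith


private lemma sqrt_two_ge' : (1.41:ℝ) ≤ Real.sqrt 2 := by
  have h := Real.sq_sqrt (by norm_num : (0:ℝ) ≤ 2)
  nlinarith [Real.sqrt_nonneg 2]

private lemma le7_of_sq' {t : ℝ} (ht : 0 ≤ t) (h : t^2 ≤ 49) : t ≤ 7 := by nlinarith

private lemma one_le_of_sq' {t : ℝ} (ht : 0 ≤ t) (h : 1 ≤ t^2) : 1 ≤ t := by nlinarith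

private lemma seven_le_of_sq' {t : ℝ} (ht : 0 ≤ t) (h : 49 ≤ t^2) : 7 ≤ t := by nlinarith

private lemma quad_bound' {t : ℝ} (h1 : 1 ≤ t) (h7 : t ≤ 7) : t^2 + 1 ≤ 8*t := by nlinarith

set_option maxHeartbeats 12000000 in
theorem stmt5 (α η γ : ℝ) (hγ : 1 < γ)
    (hbad : ∀ x : ℕ, 1 ≤ x → 1 / (γ * x) ≤ dni (α * x))
    (ν μ : ℕ) (hν : 1 ≤ ν) (hμ : 1 ≤ μ) :
    (({x : ℕ | (2:ℝ)^ν ≤ x ∧ (x:ℝ) < 2^(ν+1) ∧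
        (2:ℝ)^(-(μ:ℤ)-1) < dni (α * x - η) ∧
        dni (α * x - η) ≤ (2:ℝ)^(-(μ:ℤ))}).ncard : ℝ)
      ≤ 8 * max (Real.sqrt (γ * 2^((ν:ℤ)-μ+1))) (max ((2:ℝ)^((ν:ℤ)-μ)) 1) := by
  classical
  set F : Finset ℕ := (Finset.range (2^(ν+1))).filter (fun x : ℕ =>
      (2:ℝ)^ν ≤ x ∧ (x:ℝ) < 2^(ν+1) ∧
      (2:ℝ)^(-(μ:ℤ)-1) < dni (α * x - η) ∧
      dni (α * x - η) ≤ (2:ℝ)^(-(μ:ℤ))) with hF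
  clear_value F
  have hset : {x : ℕ | (2:ℝ)^ν ≤ x ∧ (x:ℝ) < 2^(ν+1) ∧
      (2:ℝ)^(-(μ:ℤ)-1) < dni (α * x - η) ∧
      dni (α * x - η) ≤ (2:ℝ)^(-(μ:ℤ))} = ↑F := by
    ext x
    simp only [hF, Finset.coe_filter, Finset.mem_range, Set.mem_setOf_eq]
    constructor
    · intro hx
      refine ⟨?_, hx⟩
      have h2 : (x:ℝ) < ((2^(ν+1):ℕ):ℝ) := by push_cast; exact hx.2.1
      exact_mod_cast h2
    · exact fun hx => hx.2
  rw [hset, Set.ncard_coe_finset]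
  set ε : ℝ := (2:ℝ)^(-(μ:ℤ)) with hεdef
  set W : ℝ := (2:ℝ)^ν with hWdef
  clear_value ε W
  have hγpos : (0:ℝ) < γ := lt_trans one_pos hγ
  have hεpos : 0 < ε := by rw [hεdef]; positivity
  have hεhalf : ε ≤ 1/2 := by
    rw [hεdef]
    calc (2:ℝ)^(-(μ:ℤ)) ≤ (2:ℝ)^(-(1:ℤ)) := by
          apply zpow_le_zpow_right₀ (by norm_num)
          omega
      _ = 1/2 := by norm_num
  have hW2 : 2 ≤ W := by
    rw [hWdef]
    calc (2:ℝ) = 2^1 := (pow_one 2).symm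
      _ ≤ 2^ν := by apply pow_le_pow_right₀ (by norm_num) hν
  have hWpos : 0 < W := by linarith
  have hmemF : ∀ x ∈ F, W ≤ x ∧ (x:ℝ) < 2*W ∧ dni (α*x - η) ≤ ε := by
    intro x hx
    rw [hF, Finset.mem_filter] at hx
    obtain ⟨-, h1, h2, -, h4⟩ := hx
    refine ⟨h1, ?_, h4⟩
    rw [pow_succ] at h2
    rw [hWdef]
    linarith
  set S : ℝ := Real.sqrt (γ*(ε*W)) with hSdef
  clear_value S
  have hSnn : (0:ℝ) ≤ S := by rw [hSdef]; positivity
  have hSsq : S^2 = γ*(ε*W) := by rw [hSdef]; exact Real.sq_sqrt (by positivity)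
  -- ### Part 1: separation bound
  have hsep : ∀ x ∈ F, ∀ y ∈ F, y < x → 1/(2*γ*ε) ≤ (x:ℝ) - y := by
    intro x hx y hy hxy
    obtain ⟨hx1, hx2, hx3⟩ := hmemF x hx
    obtain ⟨hy1, hy2, hy3⟩ := hmemF y hy
    set d : ℕ := x - y with hd
    have hd1 : 1 ≤ d := by omega
    have hdR : (d:ℝ) = (x:ℝ) - y := by
      rw [hd]
      push_cast [Nat.cast_sub hxy.le]
      ring
    have hdni : dni (α * d) ≤ 2*ε := by
      have h := dni_le (α * d) (round (α*x - η) - round (α*y - η))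
      have e : α * (d:ℝ) - ((round (α*x - η) - round (α*y - η) : ℤ):ℝ)
             = (α*x - η - ((round (α*x - η):ℤ):ℝ)) - (α*y - η - ((round (α*y - η):ℤ):ℝ)) := by
        push_cast
        rw [hdR]
        ring
      rw [e] at h
      have htri : |(α*x - η - ((round (α*x - η):ℤ):ℝ)) - (α*y - η - ((round (α*y - η):ℤ):ℝ))|
          ≤ |α*x - η - ((round (α*x - η):ℤ):ℝ)| + |α*y - η - ((round (α*y - η):ℤ):ℝ)| := by
        have h := abs_add_le (α*x - η - ((round (α*x - η):ℤ):ℝ)) (-(α*y - η - ((round (α*y - η):ℤ):ℝ)))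
        rw [abs_neg] at h
        calc |(α*x - η - ((round (α*x - η):ℤ):ℝ)) - (α*y - η - ((round (α*y - η):ℤ):ℝ))|
            = |(α*x - η - ((round (α*x - η):ℤ):ℝ)) + -(α*y - η - ((round (α*y - η):ℤ):ℝ))| := by
              rw [sub_eq_add_neg]
          _ ≤ _ := h
      have hx3' : |α*x - η - ((round (α*x - η):ℤ):ℝ)| ≤ ε := hx3
      have hy3' : |α*y - η - ((round (α*y - η):ℤ):ℝ)| ≤ ε := hy3
      linarith
    have hb := hbad d hd1
    have hdpos : (0:ℝ) < d := by exact_mod_cast hd1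
    have h5 : 1/(γ*d) ≤ 2*ε := le_trans hb hdni
    rw [← hdR]
    rw [div_le_iff₀ (by positivity)] at h5
    rw [div_le_iff₀ (by positivity)]
    rw [show ((d:ℝ))*(2*γ*ε) = 2*ε*(γ*(d:ℝ)) from by ring]
    exact h5
  have hcount1 : (F.card : ℝ) ≤ 2*γ*ε*W + 1 := by
    set s : ℝ := 2*γ*ε with hs
    clear_value s
    have hspos : 0 < s := by rw [hs]; positivity
    set g : ℕ → ℕ := fun x => ⌊((x:ℝ) - W) * s⌋₊ with hg
    clear_value g
    have hmapsg : ∀ x ∈ F, g x ∈ Finset.range (⌊W * s⌋₊ + 1) := by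
      intro x hx
      obtain ⟨hx1, hx2, -⟩ := hmemF x hx
      rw [Finset.mem_range, Nat.lt_succ_iff, hg]
      apply Nat.floor_le_floor
      apply mul_le_mul_of_nonneg_right (by linarith) hspos.le
    have hkey : ∀ x ∈ F, ∀ y ∈ F, y < x → g y < g x := by
      intro x hx y hy hxy
      obtain ⟨hx1, -, -⟩ := hmemF x hx
      obtain ⟨hy1, -, -⟩ := hmemF y hy
      have h1 := hsep x hx y hy hxy
      have hyW : (0:ℝ) ≤ ((y:ℝ) - W) * s := by
        apply mul_nonneg (by linarith) hspos.le
      have h2 : ((y:ℝ) - W)*s + 1 ≤ ((x:ℝ) - W)*s := by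
        have h3 : 1 ≤ ((x:ℝ) - y)*s := by
          rw [← div_le_iff₀ hspos]
          exact h1
        have e : ((x:ℝ)-W)*s = ((y:ℝ)-W)*s + ((x:ℝ)-(y:ℝ))*s := by ring
        linarith
      have h4 : g y + 1 = ⌊((y:ℝ) - W)*s + 1⌋₊ := by
        rw [hg]
        simp only
        rw [Nat.floor_add_one hyW]
      have h5 : g y + 1 ≤ g x := by
        rw [h4, hg]
        simp only
        exact Nat.floor_le_floor h2
      omega
    have hinj : Set.InjOn g ↑F := by
      intro x hx y hy hgxy
      by_contra hne
      rcases lt_or_gt_of_ne hne with h | h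
      · exact absurd hgxy (Nat.ne_of_lt (hkey y (Finset.mem_coe.mp hy) x (Finset.mem_coe.mp hx) h))
      · exact absurd hgxy (Nat.ne_of_lt (hkey x (Finset.mem_coe.mp hx) y (Finset.mem_coe.mp hy) h)).symm
    have hcard := Finset.card_le_card_of_injOn g hmapsg hinj
    rw [Finset.card_range] at hcard
    calc (F.card : ℝ) ≤ (⌊W * s⌋₊ + 1 : ℕ) := by exact_mod_cast hcard
      _ ≤ W*s + 1 := by
          push_cast
          have := Nat.floor_le (a := W*s) (by positivity)
          linarith
      _ = s*W + 1 := by ring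
  -- ### Part 2: Dirichlet counting bound
  have hcount2 : (F.card : ℝ) ≤ 3*(ε*W) + 6.5*S + 2 := by
    set S0 : ℝ := Real.sqrt (γ*W/ε) with hS0def
    clear_value S0
    have hS0pos : 0 < S0 := by
      rw [hS0def]; exact Real.sqrt_pos.mpr (by positivity)
    have hS0sq : S0^2 = γ*W/ε := by rw [hS0def]; exact Real.sq_sqrt (by positivity)
    have hS0sq' : S0^2 * ε = γ*W := by
      rw [hS0sq]; field_simp
    have hSS0 : S = ε * S0 := by
      rw [hSdef, show γ*(ε*W) = (ε*S0)^2 by linear_combination (-ε) * hS0sq']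
      exact Real.sqrt_sq (by positivity)
    set n : ℕ := ⌈2*S0⌉₊ with hn
    clear_value n
    have hnpos : 0 < n := by
      rw [hn]; exact Nat.ceil_pos.mpr (by positivity)
    have hnlb : 2*S0 ≤ (n:ℝ) := by rw [hn]; exact Nat.le_ceil _
    have hnub : (n:ℝ) ≤ 2*S0 + 1 := by
      rw [hn]; exact (Nat.ceil_lt_add_one (by positivity)).le
    obtain ⟨r, hr1, hr2⟩ := Real.exists_rat_abs_sub_le_and_den_le α hnpos
    set q : ℕ := r.den with hq
    set a : ℤ := r.num with ha
    clear_value q a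
    have hqpos : 0 < q := by rw [hq]; exact r.pos
    have hqR : (0:ℝ) < q := by exact_mod_cast hqpos
    have hrcast : (r:ℝ) = (a:ℝ)/q := by
      rw [ha, hq, Rat.cast_def]
    have hqn : (q:ℝ) ≤ n := by exact_mod_cast hr2
    have hγq : (n:ℝ) + 1 ≤ γ * q := by
      have h2 := dni_le (α*q) a
      have h3 : |α*(q:ℝ) - a| = |α - r| * q := by
        have e : α*(q:ℝ) - a = (α - (r:ℝ))*q := by
          rw [hrcast]; field_simp
        rw [e, abs_mul, abs_of_pos hqR]
      have h1 : dni (α * q) ≤ 1/((n:ℝ)+1) := by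
        calc dni (α*q) ≤ |α*(q:ℝ) - a| := h2
          _ = |α - (r:ℝ)| * q := h3
          _ ≤ (1/(((n:ℝ)+1)*q))*q := mul_le_mul_of_nonneg_right hr1 hqR.le
          _ = 1/((n:ℝ)+1) := by field_simp <;> ring
      have h4 := hbad q hqpos
      have h5 : 1/(γ*(q:ℝ)) ≤ 1/((n:ℝ)+1) := le_trans h4 h1
      rw [div_le_div_iff₀ (by positivity) (by positivity)] at h5
      linarith
    set ε' : ℝ := ε + 2*W/(((n:ℝ)+1)*q) with hε'
    clear_value ε'
    have hε'pos : 0 < ε' := by rw [hε']; positivity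
    have hkey : ∀ x ∈ F, dni ((a:ℝ)*x/q - η) ≤ ε' := by
      intro x hx
      obtain ⟨hx1, hx2, hx3⟩ := hmemF x hx
      have h2 := dni_le ((a:ℝ)*x/q - η) (round (α*x - η))
      have e : (a:ℝ)*x/q - η - ((round (α*x - η):ℤ):ℝ)
          = (α*x - η - ((round (α*x - η):ℤ):ℝ)) + ((r:ℝ) - α)*x := by
        rw [hrcast]; field_simp; ring
      rw [e] at h2
      have h3 : |(α*x - η - ((round (α*x-η):ℤ):ℝ)) + ((r:ℝ) - α)*x|
          ≤ ε + |(r:ℝ) - α| * |(x:ℝ)| := by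
        refine le_trans (abs_add_le _ _) ?_
        rw [abs_mul]
        exact add_le_add hx3 le_rfl
      have h4 : |(r:ℝ) - α| * |(x:ℝ)| ≤ 2*W/(((n:ℝ)+1)*q) := by
        have hxabs : |(x:ℝ)| ≤ 2*W := by
          rw [abs_of_nonneg (Nat.cast_nonneg x)]; linarith
        have habs : |(r:ℝ) - α| ≤ 1/(((n:ℝ)+1)*q) := by
          rw [abs_sub_comm]; exact hr1
        calc |(r:ℝ) - α| * |(x:ℝ)| ≤ (1/(((n:ℝ)+1)*q))*(2*W) := by
              apply mul_le_mul habs hxabs (abs_nonneg _) (by positivity)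
          _ = 2*W/(((n:ℝ)+1)*q) := by ring
      rw [hε']
      calc dni ((a:ℝ)*x/q - η) ≤ _ := h2
        _ ≤ ε + |(r:ℝ) - α| * |(x:ℝ)| := h3
        _ ≤ ε + 2*W/(((n:ℝ)+1)*q) := by linarith
    set f : ℕ → ℤ := fun x => a*x - q*(round ((a:ℝ)*x/q - η)) with hf
    clear_value f
    have hfz : ∀ x ∈ F, |((f x : ℤ):ℝ) - (q:ℝ)*η| ≤ q*ε' := by
      intro x hx
      have h1 := hkey x hx
      have e : ((f x:ℤ):ℝ) - (q:ℝ)*η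
          = ((a:ℝ)*x/q - η - ((round ((a:ℝ)*x/q - η):ℤ):ℝ)) * q := by
        rw [hf]
        push_cast
        field_simp
        ring
      rw [e, abs_mul, abs_of_pos hqR]
      have e2 : |(a:ℝ)*x/q - η - ((round ((a:ℝ)*x/q - η):ℤ):ℝ)| = dni ((a:ℝ)*x/q - η) := rfl
      rw [e2]
      calc dni ((a:ℝ)*x/q - η) * q ≤ ε' * q := mul_le_mul_of_nonneg_right h1 hqR.le
        _ = (q:ℝ) * ε' := mul_comm _ _
    set zl : ℤ := ⌈(q:ℝ)*η - (q:ℝ)*ε'⌉ with hzl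
    set zu : ℤ := ⌊(q:ℝ)*η + (q:ℝ)*ε'⌋ with hzu
    clear_value zl zu
    have hmaps : ∀ x ∈ F, f x ∈ Finset.Icc zl zu := by
      intro x hx
      have h1 := hfz x hx
      rw [abs_le] at h1
      rw [Finset.mem_Icc, hzl, hzu]
      constructor
      · apply Int.ceil_le.mpr
        push_cast
        linarith [h1.1]
      · apply Int.le_floor.mpr
        push_cast
        linarith [h1.2]
    set K : ℕ := (2^ν - 1)/q + 1 with hK
    clear_value K
    have hcop : IsCoprime (q:ℤ) a := by
      rw [Int.isCoprime_iff_gcd_eq_one]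
      have hred := r.reduced
      simpa [Int.gcd, ha, hq, Nat.coprime_comm] using hred.symm
    have hfib : ∀ z : ℤ, (F.filter (fun x => f x = z)).card ≤ K := by
      intro z
      set G := F.filter (fun x => f x = z) with hG
      clear_value G
      have hGmem : ∀ x ∈ G, 2^ν ≤ x ∧ x < 2^(ν+1) ∧ f x = z := by
        intro x hx
        rw [hG, Finset.mem_filter] at hx
        obtain ⟨hxF, hxz⟩ := hx
        obtain ⟨h1, h2, -⟩ := hmemF x hxF
        have hWnat : ((2^ν : ℕ):ℝ) = W := by rw [hWdef]; push_cast; ring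
        refine ⟨?_, ?_, hxz⟩
        · have : ((2^ν:ℕ):ℝ) ≤ x := by rw [hWnat]; exact h1
          exact_mod_cast this
        · rw [hF, Finset.mem_filter, Finset.mem_range] at hxF
          exact hxF.1
      have hdvd : ∀ x ∈ G, ∀ y ∈ G, (q:ℤ) ∣ (x:ℤ) - y := by
        intro x hx y hy
        obtain ⟨-, -, hfx⟩ := hGmem x hx
        obtain ⟨-, -, hfy⟩ := hGmem y hy
        have h1 : a*(x:ℤ) - q*(round ((a:ℝ)*x/q - η)) = a*y - q*(round ((a:ℝ)*y/q - η)) := by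
          rw [hf] at hfx hfy
          simp only at hfx hfy
          rw [hfx, hfy]
        have h2 : a*((x:ℤ) - y) = (q:ℤ)*((round ((a:ℝ)*x/q - η)) - (round ((a:ℝ)*y/q - η))) := by
          linear_combination h1
        exact hcop.dvd_of_dvd_mul_left ⟨_, h2⟩
      set g2 : ℕ → ℕ := fun x => (x - 2^ν)/q with hg2
      clear_value g2
      have hmaps2 : ∀ x ∈ G, g2 x ∈ Finset.range K := by
        intro x hx
        obtain ⟨h1, h2, -⟩ := hGmem x hx
        rw [Finset.mem_range, hK, hg2]
        have hpow : 2^(ν+1) = 2^ν + 2^ν := by rw [pow_succ]; ring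
        have h3 : x - 2^ν ≤ 2^ν - 1 := by omega
        calc (x - 2^ν)/q ≤ (2^ν - 1)/q := Nat.div_le_div_right h3
          _ < (2^ν-1)/q + 1 := Nat.lt_succ_self _
      have haux : ∀ x ∈ G, ∀ y ∈ G, y ≤ x → g2 x = g2 y → x = y := by
        intro x hx y hy hyx hgxy
        obtain ⟨hx1, -, -⟩ := hGmem x hx
        obtain ⟨hy1, -, -⟩ := hGmem y hy
        have hd := hdvd x hx y hy
        have hcast : ((x - y : ℕ) : ℤ) = (x:ℤ) - y := by omega
        have hd2 : q ∣ x - y := by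
          rw [← Int.natCast_dvd_natCast]
          push_cast [hcast]
          exact_mod_cast hd
        obtain ⟨t, ht⟩ := hd2
        have hx2 : x - 2^ν = (y - 2^ν) + (x - y) := by omega
        rw [ht] at hx2
        rw [hg2] at hgxy
        simp only at hgxy
        rw [hx2, Nat.add_mul_div_left _ _ hqpos] at hgxy
        have ht0 : t = 0 := Nat.add_left_cancel (hgxy.trans (Nat.add_zero _).symm)
        rw [ht0, Nat.mul_zero] at ht
        omega
      have hinj2 : Set.InjOn g2 ↑G := by
        intro x hx y hy hxy
        rcases le_total y x with h | h
        · exact haux x (Finset.mem_coe.mp hx) y (Finset.mem_coe.mp hy) h hxy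
        · exact (haux y (Finset.mem_coe.mp hy) x (Finset.mem_coe.mp hx) h hxy.symm).symm
      calc G.card ≤ (Finset.range K).card := Finset.card_le_card_of_injOn g2 hmaps2 hinj2
        _ = K := Finset.card_range K
    have hcard : F.card ≤ K * (Finset.Icc zl zu).card := by
      calc F.card ≤ K * (F.image f).card :=
            Finset.card_le_mul_card_image F K (fun z _ => hfib z)
        _ ≤ K * (Finset.Icc zl zu).card := by
            apply Nat.mul_le_mul_left
            apply Finset.card_le_card
            intro z hz
            obtain ⟨x, hx, hfx⟩ := Finset.mem_image.mp hz
            rw [← hfx]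
            exact hmaps x hx
    have hKR : (K:ℝ) ≤ W/q + 1 := by
      rw [hK]
      have h1 : (((2^ν - 1)/q : ℕ):ℝ) ≤ ((2^ν - 1 : ℕ):ℝ)/(q:ℝ) := Nat.cast_div_le
      have h2 : ((2^ν - 1:ℕ):ℝ) ≤ W := by
        have : ((2^ν - 1:ℕ):ℝ) ≤ ((2^ν:ℕ):ℝ) := by
          exact_mod_cast Nat.sub_le _ _
        have hWnat : ((2^ν : ℕ):ℝ) = W := by rw [hWdef]; push_cast; ring
        linarith [hWnat ▸ this]
      have h3 : ((2^ν - 1 : ℕ):ℝ)/(q:ℝ) ≤ W/q := by gcongr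
      have h4 : (((2^ν - 1)/q + 1 : ℕ):ℝ) = (((2^ν - 1)/q : ℕ):ℝ) + 1 := by push_cast; ring
      rw [h4]
      linarith
    have hZR : ((Finset.Icc zl zu).card : ℝ) ≤ 2*(q:ℝ)*ε' + 1 := by
      rcases le_or_gt zl zu with h | h
      · rw [Int.card_Icc]
        have h0 : (0:ℤ) ≤ zu + 1 - zl := by omega
        have l1 : (q:ℝ)*η - (q:ℝ)*ε' ≤ (zl:ℝ) := by rw [hzl]; exact Int.le_ceil _
        have l2 : (zu:ℝ) ≤ (q:ℝ)*η + (q:ℝ)*ε' := by rw [hzu]; exact Int.floor_le _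
        have h1 : (((zu + 1 - zl).toNat : ℕ):ℝ) = (zu:ℝ) + 1 - zl := by
          rw [show (((zu + 1 - zl).toNat : ℕ):ℝ) = (((zu + 1 - zl).toNat : ℤ):ℝ) by push_cast; ring,
             Int.toNat_of_nonneg h0]
          push_cast; ring
        rw [h1]
        linarith
      · rw [Finset.Icc_eq_empty (not_le.mpr h)]
        simp
        positivity
    have hNR : (F.card : ℝ) ≤ (W/q + 1)*(2*(q:ℝ)*ε' + 1) := by
      calc (F.card:ℝ) ≤ ((K * (Finset.Icc zl zu).card : ℕ):ℝ) := by exact_mod_cast hcard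
        _ = (K:ℝ) * ((Finset.Icc zl zu).card:ℝ) := by push_cast; ring
        _ ≤ (W/q + 1)*(2*(q:ℝ)*ε' + 1) := by
            apply mul_le_mul hKR hZR (by positivity) (by positivity)
    set u : ℝ := W/q with hu
    set v : ℝ := W/((n:ℝ)+1) with hv
    clear_value u v
    have hupos : 0 < u := by rw [hu]; positivity
    have hvpos : 0 < v := by rw [hv]; positivity
    have huq : u*q = W := by
      rw [hu, div_mul_cancel₀ _ hqR.ne']
    have hqε' : (q:ℝ)*ε' = (q:ℝ)*ε + 2*v := by
      rw [hε', hv]; field_simp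
    have hp1 : u ≤ γ*v := by
      have h1 : W/(q:ℝ) ≤ (γ*W)/((n:ℝ)+1) := by
        rw [div_le_div_iff₀ hqR (by positivity)]
        have h0 := mul_le_mul_of_nonneg_left hγq hWpos.le
        have e : W*(γ*(q:ℝ)) = γ*W*(q:ℝ) := by ring
        linarith [h0, e.le, e.ge]
      calc u = W/(q:ℝ) := by rw [hu]
        _ ≤ (γ*W)/((n:ℝ)+1) := h1
        _ = γ*v := by rw [hv]; ring
    have hp2 : v ≤ S/(2*γ) := by
      have h1 : v ≤ W/(2*S0) := by
        rw [hv, div_le_div_iff₀ (by positivity) (by positivity)]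
        exact mul_le_mul_of_nonneg_left (by linarith) hWpos.le
      have h2 : W/(2*S0) = S/(2*γ) := by
        rw [hSS0, div_eq_div_iff (by positivity) (by positivity)]
        linear_combination (-2) * hS0sq' 
      rw [← h2]
      exact h1
    have hp3 : (q:ℝ)*ε ≤ 2*S + ε := by
      have h1 : (q:ℝ)*ε ≤ (n:ℝ)*ε := mul_le_mul_of_nonneg_right hqn hεpos.le
      have h2 : (n:ℝ)*ε ≤ (2*S0+1)*ε := mul_le_mul_of_nonneg_right hnub hεpos.le
      have h3 : (2*S0+1)*ε = 2*S + ε := by rw [hSS0]; ring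
      linarith
    have h4uv : u*(4*v) ≤ ε*W := by
      have a1 : u*v ≤ (γ*v)*v := mul_le_mul_of_nonneg_right hp1 hvpos.le
      have a2 : v*v ≤ (S/(2*γ))*(S/(2*γ)) :=
        mul_le_mul hp2 hp2 hvpos.le (by positivity)
      have a3 : γ*((S/(2*γ))*(S/(2*γ))) = S^2/(4*γ) := by
        field_simp
        ring
      have a4 : S^2/(4*γ) = ε*W/4 := by
        rw [hSsq]
        field_simp
      have a5 : γ*(v*v) ≤ ε*W/4 := by
        calc γ*(v*v) ≤ γ*((S/(2*γ))*(S/(2*γ))) := by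
              apply mul_le_mul_of_nonneg_left a2 hγpos.le
          _ = S^2/(4*γ) := a3
          _ = ε*W/4 := a4
      have a6 : u*(4*v) = 4*(u*v) := by ring
      have a7 : (γ*v)*v = γ*(v*v) := by ring
      rw [a7] at a1
      rw [a6]
      linarith [a1, a5]
    have hγv : γ*v ≤ S/2 := by
      have h1 := mul_le_mul_of_nonneg_left hp2 hγpos.le
      have h2 : γ*(S/(2*γ)) = S/2 := by
        field_simp
      linarith
    have hv2 : 4*v ≤ 2*S := by
      have h1 : 4*v ≤ 4*(S/(2*γ)) := by linarith [hp2]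
      have h2 : 4*(S/(2*γ)) = 2*(S/γ) := by ring
      have h3 : S/γ ≤ S := by
        rw [div_le_iff₀ hγpos]
        have := mul_le_mul_of_nonneg_left hγ.le hSnn
        linarith [this]
      linarith
    have hu_le : u ≤ S/2 := le_trans hp1 hγv
    have hexp : (u + 1)*(2*(q:ℝ)*ε' + 1)
        = 2*(ε*(u*(q:ℝ))) + u*(4*v) + u + 2*((q:ℝ)*ε) + 4*v + 1 := by
      rw [show 2*(q:ℝ)*ε' = 2*((q:ℝ)*ε') by ring, hqε']
      ring
    rw [hexp, huq] at hNR
    linarith [h4uv, hu_le, hp3, hv2, hεhalf, hNR]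
  -- ### endgame
  have hεW : (2:ℝ)^((ν:ℤ)-(μ:ℤ)) = ε * W := by
    rw [hεdef, hWdef, ← zpow_natCast (2:ℝ) ν, ← zpow_add₀ (two_ne_zero)]
    congr 1
    ring
  have hTeq : γ * (2:ℝ)^((ν:ℤ)-(μ:ℤ)+1) = 2*(γ*(ε*W)) := by
    have : (2:ℝ)^((ν:ℤ)-(μ:ℤ)+1) = (2:ℝ)^((ν:ℤ)-(μ:ℤ)) * 2 := by
      rw [← zpow_add_one₀ (two_ne_zero)]
    rw [this, hεW]
    ring
  have hA : Real.sqrt (γ * 2^((ν:ℤ)-μ+1)) = Real.sqrt 2 * S := by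
    rw [hTeq, hSdef, ← Real.sqrt_mul (by norm_num : (0:ℝ) ≤ 2)]
  rw [hA, hεW]
  set m : ℝ := max (Real.sqrt 2 * S) (max (ε*W) 1) with hm
  have hm1 : 1 ≤ m := le_max_of_le_right (le_max_right _ _)
  have hmεW : ε*W ≤ m := le_max_of_le_right (le_max_left _ _)
  have hmS : Real.sqrt 2 * S ≤ m := le_max_left _ _
  have h2sq : (Real.sqrt 2)^2 = 2 := Real.sq_sqrt (by norm_num)
  have h2nn : (0:ℝ) ≤ Real.sqrt 2 := Real.sqrt_nonneg _
  have hsqrt2 : (1.41:ℝ) ≤ Real.sqrt 2 := sqrt_two_ge'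
  rcases le_or_gt (2*(γ*(ε*W))) 49 with hc | hc
  · -- trivial bound suffices
    have hN : (F.card:ℝ) ≤ 2*(γ*(ε*W)) + 1 := by
      calc (F.card:ℝ) ≤ 2*γ*ε*W + 1 := hcount1
        _ = 2*(γ*(ε*W)) + 1 := by ring
    have ht : Real.sqrt 2 * S ≤ 7 := by
      have h1 : (Real.sqrt 2 * S)^2 = 2*(γ*(ε*W)) := by
        rw [mul_pow, h2sq, hSsq]
      exact le7_of_sq' (mul_nonneg h2nn hSnn) (by linarith [h1])
    have ht2 : (Real.sqrt 2 * S)^2 = 2*(γ*(ε*W)) := by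
      rw [mul_pow, h2sq, hSsq]
    rcases le_or_gt (2*(γ*(ε*W))) 1 with h1 | h1
    · -- N ≤ 2 ≤ 8
      linarith [hN, hm1]
    · have h3 : 1 ≤ Real.sqrt 2 * S :=
        one_le_of_sq' (mul_nonneg h2nn hSnn) (by linarith [ht2])
      have hq := quad_bound' h3 ht
      linarith [hN, ht2, hq, hmS]
  · -- Dirichlet bound suffices
    have h7 : 7 ≤ Real.sqrt 2 * S := by
      have ht2 : (Real.sqrt 2 * S)^2 = 2*(γ*(ε*W)) := by
        rw [mul_pow, h2sq, hSsq]
      exact seven_le_of_sq' (mul_nonneg h2nn hSnn) (by linarith [ht2])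
    have hm7 : 7 ≤ m := le_trans h7 hmS
    have h141 : 1.41*S ≤ m := by
      calc 1.41*S ≤ Real.sqrt 2 * S := mul_le_mul_of_nonneg_right sqrt_two_ge' hSnn
        _ ≤ m := hmS
    linarith [hcount2, hmεW, h141, hm7]
end

section
/- Let α be badly approximable, i.e., inf_{x ∈ ℤ₊} x·‖xα‖ > 0, and suppose α₂ = (aα + b)/c with integers a, b, c, c ≠ 0 (so α₂, α, 1 are linearly dependent over ℤ). Then there exists a real η such that inf_{x ∈ ℤ₊} x·‖xα‖·‖xα₂ − η‖ > 0. -/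
lemma dni_nonneg (t : ℝ) : 0 ≤ dni t := abs_nonneg _

lemma dni_le_int (t : ℝ) (k : ℤ) : dni t ≤ |t - (k:ℝ)| := round_le t k

lemma dni_add_int (t : ℝ) (k : ℤ) : dni (t + (k:ℝ)) = dni t := by
  unfold dni
  rw [round_add_intCast]
  push_cast
  ring_nf

lemma dni_neg (t : ℝ) : dni (-t) = dni t := by
  have h1 : dni (-t) ≤ dni t := by
    calc dni (-t) ≤ |(-t) - ((-round t : ℤ):ℝ)| := dni_le_int _ _
      _ = dni t := by
          push_cast
          rw [show -t - -(round t : ℝ) = -(t - (round t : ℝ)) by ring, abs_neg]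
          rfl
  have h2 : dni t ≤ dni (-t) := by
    calc dni t ≤ |t - ((-round (-t) : ℤ):ℝ)| := dni_le_int _ _
      _ = dni (-t) := by
          push_cast
          rw [show t - -(round (-t) : ℝ) = -((-t) - (round (-t) : ℝ)) by ring, abs_neg]
          rfl
  linarith

lemma dni_add_le (s t : ℝ) : dni (s + t) ≤ dni s + dni t := by
  calc dni (s + t) ≤ |s + t - ((round s + round t : ℤ):ℝ)| := dni_le_int _ _
    _ ≤ dni s + dni t := by
        push_cast
        rw [show s + t - ((round s : ℝ) + (round t : ℝ))
            = (s - round s) + (t - round t) by ring]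
        exact abs_add_le _ _

lemma dni_int_mul_le (m : ℤ) (t : ℝ) : dni ((m:ℝ) * t) ≤ |(m:ℝ)| * dni t := by
  calc dni ((m:ℝ) * t) ≤ |(m:ℝ) * t - ((m * round t : ℤ):ℝ)| := dni_le_int _ _
    _ = |(m:ℝ)| * dni t := by
        push_cast
        rw [show (m:ℝ) * t - (m:ℝ) * (round t : ℝ) = (m:ℝ) * (t - round t) by ring,
          abs_mul]
        rfl

theorem stmt6 (α : ℝ)
    (hbad : ∃ δ > (0:ℝ), ∀ x : ℕ, 1 ≤ x → δ ≤ (x:ℝ) * dni ((x:ℝ) * α))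
    (a b c : ℤ) (hc : c ≠ 0) (α₂ : ℝ) (hα₂ : α₂ = ((a:ℝ) * α + (b:ℝ)) / (c:ℝ)) :
    ∃ η : ℝ, ∃ δ' > (0:ℝ), ∀ x : ℕ, 1 ≤ x →
      δ' ≤ (x:ℝ) * dni ((x:ℝ) * α) * dni ((x:ℝ) * α₂ - η) := by
  obtain ⟨δ, hδ, hb⟩ := hbad
  have hcR : ((c:ℝ)) ≠ 0 := Int.cast_ne_zero.mpr hc
  have hcA : (0:ℝ) < |(c:ℝ)| := abs_pos.mpr hcR
  -- badly approximable for all nonzero integers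
  have hbZ : ∀ m : ℤ, m ≠ 0 → δ ≤ |(m:ℝ)| * dni ((m:ℝ) * α) := by
    intro m hm
    have hn : 1 ≤ m.natAbs := by omega
    have key : dni ((m.natAbs : ℝ) * α) = dni ((m:ℝ) * α) := by
      rcases le_or_gt 0 m with h | h
      · have h' : ((m.natAbs : ℕ):ℝ) = (m:ℝ) := by
          rw [Nat.cast_natAbs, Int.cast_abs]
          exact abs_of_nonneg (by exact_mod_cast h)
        rw [h']
      · have h' : ((m.natAbs : ℕ):ℝ) = -(m:ℝ) := by
          rw [Nat.cast_natAbs, Int.cast_abs]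
          exact abs_of_nonpos (by exact_mod_cast h.le)
        rw [h', show (-(m:ℝ)) * α = -((m:ℝ) * α) by ring, dni_neg]
    have habs : ((m.natAbs : ℕ):ℝ) = |(m:ℝ)| := by
      rw [Nat.cast_natAbs, Int.cast_abs]
    calc δ ≤ ((m.natAbs : ℕ):ℝ) * dni ((m.natAbs : ℝ) * α) := hb _ hn
      _ = |(m:ℝ)| * dni ((m:ℝ) * α) := by rw [key, habs]
  set η : ℝ := 1 / (2 * (c:ℝ)) with hη
  have hηc : (2*(c:ℝ)) * η = 1 := by rw [hη]; field_simp
  have hcα₂ : (c:ℝ) * α₂ = (a:ℝ) * α + (b:ℝ) := by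
    rw [hα₂]; field_simp
  by_cases ha : a = 0
  · -- rational α₂ case
    refine ⟨η, δ / (2 * |(c:ℝ)|), by positivity, ?_⟩
    intro x hx
    have hB : 1 / (2 * |(c:ℝ)|) ≤ dni ((x:ℝ) * α₂ - η) := by
      set r : ℤ := round ((x:ℝ) * α₂ - η) with hr
      have hval : (x:ℝ) * α₂ - η - r = ((2*b*(x:ℤ) - 1 - 2*c*r : ℤ):ℝ) / (2*(c:ℝ)) := by
        have hx2 : (x:ℝ) * α₂ = (x:ℝ) * (b:ℝ) / (c:ℝ) := by
          rw [hα₂, ha]; push_cast; ring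
        rw [hx2, hη]; push_cast; field_simp
      have hodd : (2*b*(x:ℤ) - 1 - 2*c*r) ≠ 0 := by
        have h2 : 2*b*(x:ℤ) - 1 - 2*c*r = 2*(b*(x:ℤ)) - 1 - 2*(c*r) := by ring
        rw [h2]; omega
      have h1 : (1:ℝ) ≤ |((2*b*(x:ℤ) - 1 - 2*c*r : ℤ):ℝ)| := by
        exact_mod_cast Int.one_le_abs hodd
      have hd : dni ((x:ℝ) * α₂ - η) = |((2*b*(x:ℤ) - 1 - 2*c*r : ℤ):ℝ)| / |2*(c:ℝ)| := by
        unfold dni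
        rw [← hr, hval, abs_div]
      rw [hd, show |2*(c:ℝ)| = 2* |(c:ℝ)| by rw [abs_mul]; norm_num]
      gcongr
    have hA := hb x hx
    have hBnn := dni_nonneg ((x:ℝ) * α₂ - η)
    calc δ / (2* |(c:ℝ)|) = δ * (1/(2* |(c:ℝ)|)) := by ring
      _ ≤ δ * dni ((x:ℝ) * α₂ - η) := by gcongr
      _ ≤ (x:ℝ) * dni ((x:ℝ)*α) * dni ((x:ℝ)*α₂ - η) :=
          mul_le_mul_of_nonneg_right hA hBnn
  · have haR : ((a:ℝ)) ≠ 0 := Int.cast_ne_zero.mpr ha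
    have haA : (0:ℝ) < |(a:ℝ)| := abs_pos.mpr haR
    refine ⟨η, min (δ/(4* |(c:ℝ)|)) (δ/(16 * |(a:ℝ)| ^ 2 * |(c:ℝ)|)), by positivity, ?_⟩
    intro x hx
    have hxR : (1:ℝ) ≤ (x:ℝ) := by exact_mod_cast hx
    set A := dni ((x:ℝ)*α) with hA
    set B := dni ((x:ℝ)*α₂ - η) with hB
    have hAnn : 0 ≤ A := dni_nonneg _
    have hBnn : 0 ≤ B := dni_nonneg _
    have hxA : δ ≤ (x:ℝ) * A := hb x hx
    -- lower bound on x * B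
    have hm2 : (2*a*(x:ℤ)) ≠ 0 := by
      have : (x:ℤ) ≠ 0 := by exact_mod_cast Nat.one_le_iff_ne_zero.mp hx
      exact mul_ne_zero (mul_ne_zero two_ne_zero ha) this
    have id1 : ((2*a*(x:ℤ) : ℤ):ℝ) * α + ((2*b*(x:ℤ) - 1 : ℤ):ℝ)
        = (2*(c:ℝ)) * ((x:ℝ)*α₂ - η) := by
      push_cast
      linear_combination (-2*(x:ℝ)) * hcα₂ + hηc
    have hxB : δ/(4* |(a:ℝ)| * |(c:ℝ)|) ≤ (x:ℝ) * B := by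
      have h1 : δ ≤ |((2*a*(x:ℤ) : ℤ):ℝ)| * dni (((2*a*(x:ℤ) : ℤ):ℝ) * α) := hbZ _ hm2
      have h2 : dni (((2*a*(x:ℤ) : ℤ):ℝ) * α) = dni ((2*(c:ℝ)) * ((x:ℝ)*α₂ - η)) := by
        rw [show dni (((2*a*(x:ℤ) : ℤ):ℝ) * α)
            = dni (((2*a*(x:ℤ) : ℤ):ℝ) * α + ((2*b*(x:ℤ) - 1 : ℤ):ℝ)) from
            (dni_add_int _ _).symm, id1]
      have h3 := dni_int_mul_le (2*c) ((x:ℝ)*α₂ - η)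
      push_cast at h3
      have habs2 : |((2*a*(x:ℤ) : ℤ):ℝ)| = 2 * |(a:ℝ)| * (x:ℝ) := by
        push_cast
        rw [abs_mul, abs_mul, abs_two, abs_of_nonneg (by positivity : (0:ℝ) ≤ (x:ℝ))]
      have habs3 : |2*(c:ℝ)| = 2* |(c:ℝ)| := by rw [abs_mul]; norm_num
      rw [habs2, h2] at h1
      rw [habs3] at h3
      rw [div_le_iff₀ (by positivity)]
      nlinarith [mul_le_mul_of_nonneg_left h3 (by positivity : (0:ℝ) ≤ 2* |(a:ℝ)| * (x:ℝ))]
    -- dichotomy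
    have idh : ((a:ℝ))*((x:ℝ)*α) + (-(c:ℝ))*((x:ℝ)*α₂ - η) + ((b*(x:ℤ) : ℤ):ℝ) = (1:ℝ)/2 := by
      push_cast
      linear_combination (-(x:ℝ)) * hcα₂ + hηc/2
    have hdhalf : dni ((1:ℝ)/2) = 1/2 := by
      have : round ((1:ℝ)/2) = 1 := by norm_num [round_eq]
      unfold dni; rw [this]; norm_num
    have hhalf : (1:ℝ)/2 ≤ |(a:ℝ)| * A + |(c:ℝ)| * B := by
      have t1 : dni (((a:ℝ))*((x:ℝ)*α)) ≤ |(a:ℝ)| * A := dni_int_mul_le a _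
      have t2 := dni_int_mul_le (-c) ((x:ℝ)*α₂ - η)
      push_cast at t2
      rw [abs_neg] at t2
      have step : dni ((1:ℝ)/2) ≤ |(a:ℝ)| * A + |(c:ℝ)| * B := by
        rw [← idh, dni_add_int]
        calc dni (((a:ℝ))*((x:ℝ)*α) + (-(c:ℝ))*((x:ℝ)*α₂ - η))
            ≤ dni (((a:ℝ))*((x:ℝ)*α)) + dni ((-(c:ℝ))*((x:ℝ)*α₂ - η)) := dni_add_le _ _
          _ ≤ |(a:ℝ)| * A + |(c:ℝ)| * B := by
              exact add_le_add t1 t2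
      rw [hdhalf] at step
      exact step
    rcases le_or_gt (1/4 : ℝ) (|(c:ℝ)| * B) with hcase | hcase
    · refine le_trans (min_le_left _ _) ?_
      rw [div_le_iff₀ (by positivity)]
      have key2 : (1/4) * δ ≤ (|(c:ℝ)| * B) * ((x:ℝ) * A) :=
        mul_le_mul hcase hxA hδ.le (le_trans (by norm_num) hcase)
      have eq2 : (|(c:ℝ)| * B) * ((x:ℝ) * A) = (x:ℝ) * A * B * |(c:ℝ)| := by ring
      rw [eq2] at key2
      linarith
    · have hAc : 1/4 ≤ |(a:ℝ)| * A := by linarith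
      refine le_trans (min_le_right _ _) ?_
      rw [div_le_iff₀ (by positivity)]
      have hxB' : δ ≤ 4 * |(a:ℝ)| * |(c:ℝ)| * ((x:ℝ) * B) := by
        rw [div_le_iff₀ (by positivity)] at hxB
        nlinarith [hxB]
      have key2 : (1/4) * δ ≤ (|(a:ℝ)| * A) * (4 * |(a:ℝ)| * |(c:ℝ)| * ((x:ℝ) * B)) :=
        mul_le_mul hAc hxB' hδ.le (le_trans (by norm_num) hAc)
      have eq2 : (|(a:ℝ)| * A) * (4 * |(a:ℝ)| * |(c:ℝ)| * ((x:ℝ) * B))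
          = (x:ℝ) * A * B * (4 * |(a:ℝ)| ^ 2 * |(c:ℝ)|) := by ring
      rw [eq2] at key2
      linarith
end

section
/- Let q₀ ≤ q₁ ≤ q₂ ≤ q₃ be indices, and for each integer x let A(x) ⊆ [0,1] be a finite union of closed dyadic intervals, with B_q = ⋂_{x=q₀}^{q} ([0,1] \ A(x)). Suppose (i) mes(B_{q₂}) ≥ mes(B_{q₁})/2 > 0, (ii) for every x with q₂ < x ≤ q₃ one has mes(B_{q₁} ∩ A(x)) ≤ 2⁴·σ(x)·mes(B_{q₁}) for some σ(x) ≥ 0, and (iii) Σ_{q₂ < x ≤ q₃} σ(x) ≤ 2⁻⁶. Then mes(B_{q₃}) ≥ mes(B_{q₂})/2 > 0. -/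
/-!
Every point of `B q₂` that avoids all the sets `A x`, `q₂ < x ≤ q₃`, lies in `B q₃`. Since
`B q₂ ⊆ B q₁` and `mes (B q₁) ≤ 2 mes (B q₂)`, hypothesis (ii) bounds the part of `B q₂` that
is removed by `2⁴ · Σ σ(x) · 2 mes (B q₂) ≤ mes (B q₂) / 2`.
-/

open MeasureTheory

namespace Set

variable {α : Type*}

theorem biInter_Icc_diff_subset (S : Set α) (A : ℕ → Set α) {q₀ q : ℕ} (hq : q₀ ≤ q) :
    ⋂ x ∈ Finset.Icc q₀ q, (S \ A x) ⊆ S :=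
  (biInter_subset_of_mem (Finset.mem_Icc.2 ⟨le_rfl, hq⟩)).trans sdiff_subset

theorem antitone_biInter_Icc_diff (S : Set α) (A : ℕ → Set α) (q₀ : ℕ) :
    Antitone fun q => ⋂ x ∈ Finset.Icc q₀ q, (S \ A x) :=
  fun _ _ h => biInter_mono (fun _ hx => Finset.Icc_subset_Icc_right h hx) fun _ _ => subset_rfl

theorem biInter_Icc_diff_diff_biUnion_Ioc_subset (S : Set α) (A : ℕ → Set α) {q₀ q₂ : ℕ}
    (h : q₀ ≤ q₂) (q₃ : ℕ) :
    (⋂ x ∈ Finset.Icc q₀ q₂, (S \ A x)) \ ⋃ x ∈ Finset.Ioc q₂ q₃, A x ⊆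
      ⋂ x ∈ Finset.Icc q₀ q₃, (S \ A x) := by
  rintro y ⟨hy, hyA⟩
  refine mem_iInter₂.2 fun x hx => ?_
  obtain ⟨hx₀, hx₃⟩ := Finset.mem_Icc.1 hx
  rcases le_or_gt x q₂ with hx₂ | hx₂
  · exact mem_iInter₂.1 hy x (Finset.mem_Icc.2 ⟨hx₀, hx₂⟩)
  · exact ⟨biInter_Icc_diff_subset S A h hy,
      fun hyx => hyA (mem_biUnion (Finset.mem_Ioc.2 ⟨hx₂, hx₃⟩) hyx)⟩

end Set

namespace MeasureTheory

variable {α ι : Type*} [MeasurableSpace α] {μ : Measure α}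

theorem measure_le_add_sum_measure_inter {s t : Set α} (I : Finset ι) (A : ι → Set α)
    (h : s \ ⋃ i ∈ I, A i ⊆ t) :
    μ s ≤ μ t + ∑ i ∈ I, μ (s ∩ A i) :=
  calc μ s ≤ μ (s ∩ ⋃ i ∈ I, A i) + μ (s \ ⋃ i ∈ I, A i) :=
        measure_le_inter_add_sdiff _ _ _
    _ ≤ ∑ i ∈ I, μ (s ∩ A i) + μ t := by
      gcongr
      rw [Set.inter_iUnion₂]
      exact measure_biUnion_finset_le _ _
    _ = μ t + ∑ i ∈ I, μ (s ∩ A i) := add_comm _ _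

theorem sum_measure_inter_le_of_subset {s t : Set α} (hst : s ⊆ t) (I : Finset ι)
    (A : ι → Set α) (c : ENNReal) (σ : ι → NNReal)
    (h : ∀ i ∈ I, μ (t ∩ A i) ≤ c * σ i * μ t) :
    ∑ i ∈ I, μ (s ∩ A i) ≤ c * ↑(∑ i ∈ I, σ i) * μ t :=
  calc ∑ i ∈ I, μ (s ∩ A i) ≤ ∑ i ∈ I, c * σ i * μ t :=
        Finset.sum_le_sum fun i hi =>
          (measure_mono (Set.inter_subset_inter_left _ hst)).trans (h i hi)
    _ = c * ↑(∑ i ∈ I, σ i) * μ t := by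
      rw [ENNReal.ofNNReal_finsetSum, Finset.mul_sum, Finset.sum_mul]

end MeasureTheory

theorem ENNReal.half_le_of_le_add_half {a b : ENNReal} (ha : a ≠ ⊤) (h : a ≤ b + a / 2) :
    a / 2 ≤ b := by
  rwa [← ENNReal.add_le_add_iff_right (ENNReal.div_ne_top ha two_ne_zero), ENNReal.add_halves]

theorem stmt9_general (q₀ q₁ q₂ q₃ : ℕ) (h01 : q₀ ≤ q₁) (h12 : q₁ ≤ q₂)
    (A : ℕ → Set ℝ)
    (B : ℕ → Set ℝ)
    (hB : ∀ q, B q = ⋂ x ∈ Finset.Icc q₀ q, (Set.Icc (0:ℝ) 1 \ A x))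
    (σ : ℕ → NNReal)
    (h1 : volume (B q₁) / 2 ≤ volume (B q₂)) (h1' : 0 < volume (B q₁))
    (h2 : ∀ x, q₂ < x → x ≤ q₃ →
      volume (B q₁ ∩ A x) ≤ 2^4 * (σ x : ENNReal) * volume (B q₁))
    (h3 : (∑ x ∈ Finset.Ioc q₂ q₃, σ x) ≤ (1/2^6 : NNReal)) :
    volume (B q₂) / 2 ≤ volume (B q₃) ∧ 0 < volume (B q₃) := by
  have hB21 : B q₂ ⊆ B q₁ := by
    rw [hB, hB]
    exact Set.antitone_biInter_Icc_diff _ _ _ h12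
  have hfin : volume (B q₂) ≠ ⊤ := by
    have hB2 : B q₂ ⊆ Set.Icc 0 1 := hB q₂ ▸ Set.biInter_Icc_diff_subset _ _ (h01.trans h12)
    exact ne_top_of_le_ne_top (by simp [Real.volume_Icc]) (measure_mono hB2)
  have hB1 : volume (B q₁) ≤ 2 * volume (B q₂) := by
    rwa [ENNReal.div_le_iff_le_mul (by simp) (by simp), mul_comm] at h1
  have hconst : (2 : ENNReal) ^ 4 * ((1 / 2 ^ 6 : NNReal) : ENNReal) * 2 = 2⁻¹ := by
    rw [← ENNReal.coe_ofNat, ← ENNReal.coe_pow, ← ENNReal.coe_mul, ← ENNReal.coe_mul,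
      ← ENNReal.coe_inv two_ne_zero]
    norm_num
  have hremoved : ∑ x ∈ Finset.Ioc q₂ q₃, volume (B q₂ ∩ A x) ≤ volume (B q₂) / 2 :=
    calc _ ≤ 2 ^ 4 * ↑(∑ x ∈ Finset.Ioc q₂ q₃, σ x) * volume (B q₁) :=
          sum_measure_inter_le_of_subset hB21 _ _ _ _ fun x hx =>
            h2 x (Finset.mem_Ioc.1 hx).1 (Finset.mem_Ioc.1 hx).2
      _ ≤ 2 ^ 4 * ((1 / 2 ^ 6 : NNReal) : ENNReal) * (2 * volume (B q₂)) := by gcongr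
      _ = volume (B q₂) / 2 := by rw [← mul_assoc, hconst, ENNReal.div_eq_inv_mul]
  have hsurvive : B q₂ \ ⋃ x ∈ Finset.Ioc q₂ q₃, A x ⊆ B q₃ := by
    rw [hB, hB]
    exact Set.biInter_Icc_diff_diff_biUnion_Ioc_subset _ _ (h01.trans h12) q₃
  have hlow : volume (B q₂) / 2 ≤ volume (B q₃) := ENNReal.half_le_of_le_add_half hfin <|
    (measure_le_add_sum_measure_inter _ _ hsurvive).trans (add_le_add_right hremoved _)
  have hpos : 0 < volume (B q₂) := (ENNReal.half_pos h1'.ne').trans_le h1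
  exact ⟨hlow, (ENNReal.half_pos hpos.ne').trans_le hlow⟩

theorem stmt9 (q₀ q₁ q₂ q₃ : ℕ) (h01 : q₀ ≤ q₁) (h12 : q₁ ≤ q₂) (h23 : q₂ ≤ q₃)
    (A : ℕ → Set ℝ) (hA : ∀ x, MeasurableSet (A x))
    (B : ℕ → Set ℝ)
    (hB : ∀ q, B q = ⋂ x ∈ Finset.Icc q₀ q, (Set.Icc (0:ℝ) 1 \ A x))
    (σ : ℕ → NNReal)
    (h1 : volume (B q₁) / 2 ≤ volume (B q₂)) (h1' : 0 < volume (B q₁))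
    (h2 : ∀ x, q₂ < x → x ≤ q₃ →
      volume (B q₁ ∩ A x) ≤ 2^4 * (σ x : ENNReal) * volume (B q₁))
    (h3 : (∑ x ∈ Finset.Ioc q₂ q₃, σ x) ≤ (1/2^6 : NNReal)) :
    volume (B q₂) / 2 ≤ volume (B q₃) ∧ 0 < volume (B q₃) :=
  stmt9_general q₀ q₁ q₂ q₃ h01 h12 A B hB σ h1 h1' h2 h3
end

section
/- Let B ⊆ [0,1] be a finite union of dyadic intervals of the common form [a/2^l, (a+1)/2^l] with a ∈ ℤ. Let x ≥ 2^{l+1} be an integer, let σ ∈ (0, 1/2], η ∈ ℝ, and let E(x) = ⋃_{y=0}^{x} [ (y+η)/x − σ/x, (y+η)/x + σ/x ] ∩ [0,1]. Then the Lebesgue measure of B ∩ E(x) is at most 2⁴·σ·mes(B). -/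
/-!
A dyadic component `J` of `B` has length `h ≥ 2 / x`. The intervals of `E(x)` meeting `J` have
indices `y` in an interval of length `x h + 2σ`, so there are at most `x h + 2σ + 1 ≤ 2 x h` of
them, each of length `2σ / x`; hence `|J ∩ E(x)| ≤ 4σ |J|`. Distinct components overlap only in
endpoints, so summing over them gives the bound for `B`.
-/

open MeasureTheory Set Function

theorem Int.card_Icc_ceil_floor_le {u v : ℝ} (huv : u ≤ v) :
    ((Finset.Icc ⌈u⌉ ⌊v⌋).card : ℝ) ≤ v - u + 1 := by
  have hnonneg : 0 ≤ ⌊v⌋ + 1 - ⌈u⌉ := by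
    have := Int.ceil_le_floor_add_one u
    have := Int.floor_mono huv
    omega
  rw [Int.card_Icc, ← Int.cast_natCast, Int.toNat_of_nonneg hnonneg]
  push_cast
  linarith [Int.floor_le v, Int.le_ceil u]

theorem aedisjoint_Icc_of_le {a b c d : ℝ} (hbc : b ≤ c) :
    AEDisjoint volume (Icc a b) (Icc c d) := by
  refine measure_mono_null (t := Icc c b) (fun z hz => ⟨hz.2.1, hz.1.2⟩) ?_
  rw [Real.volume_Icc, ENNReal.ofReal_eq_zero]
  linarith

theorem pairwise_aedisjoint_Icc_intCast_div {N : ℝ} (hN : 0 < N) (S : Set ℤ) :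
    S.Pairwise (AEDisjoint volume on fun a : ℤ => Icc ((a : ℝ) / N) ((a + 1) / N)) := by
  have key : ∀ a b : ℤ, a < b →
      AEDisjoint volume (Icc ((a : ℝ) / N) ((a + 1) / N)) (Icc ((b : ℝ) / N) ((b + 1) / N)) :=
    fun a b hab => aedisjoint_Icc_of_le <| by
      gcongr
      exact_mod_cast hab
  intro a _ b _ hab
  rcases hab.lt_or_gt with h | h
  · exact key a b h
  · exact (key b a h).symm

theorem measure_biUnion_inter_le_mul {α ι : Type*} [MeasurableSpace α] {μ : Measure α}
    {S : Finset ι} {J : ι → Set α} (hdisj : (S : Set ι).Pairwise (AEDisjoint μ on J))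
    (hmeas : ∀ a ∈ S, NullMeasurableSet (J a) μ) {E : Set α} {c : ENNReal}
    (h : ∀ a ∈ S, μ (J a ∩ E) ≤ c * μ (J a)) :
    μ ((⋃ a ∈ S, J a) ∩ E) ≤ c * μ (⋃ a ∈ S, J a) := by
  rw [iUnion₂_inter, measure_biUnion_finset₀ hdisj hmeas, Finset.mul_sum]
  exact (measure_biUnion_finset_le S _).trans (Finset.sum_le_sum h)

theorem volume_Icc_inter_biUnion_Icc_le {c d x σ η : ℝ} (hcd : c ≤ d) (hx : 0 < x) (hσ : 0 ≤ σ)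
    (F : Finset ℕ) :
    volume (Icc c d ∩ ⋃ y ∈ F, Icc (((y : ℝ) + η) / x - σ / x) ((y + η) / x + σ / x))
      ≤ ENNReal.ofReal ((x * (d - c) + 2 * σ + 1) * (2 * σ / x)) := by
  classical
  set I : ℕ → Set ℝ := fun y => Icc (((y : ℝ) + η) / x - σ / x) ((y + η) / x + σ / x)
  set T := F.filter fun y => (Icc c d ∩ I y).Nonempty
  have hT : ∀ y ∈ T, (y : ℝ) ∈ Icc (x * c - η - σ) (x * d - η + σ) := by
    intro y hy
    obtain ⟨z, ⟨hcz, hzd⟩, hz⟩ := (Finset.mem_filter.mp hy).2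
    simp only [I, mem_Icc, ← sub_div, ← add_div, div_le_iff₀ hx, le_div_iff₀ hx] at hz
    constructor <;> nlinarith
  have hcard : (T.card : ℝ) ≤ x * (d - c) + 2 * σ + 1 := by
    have hsub : T.card ≤ (Finset.Icc ⌈x * c - η - σ⌉ ⌊x * d - η + σ⌋).card := by
      refine Finset.card_le_card_of_injOn (fun y : ℕ => (y : ℤ)) (fun y hy => ?_)
        Nat.cast_injective.injOn
      obtain ⟨h1, h2⟩ := hT y hy
      exact Finset.mem_Icc.mpr ⟨Int.ceil_le.mpr (mod_cast h1), Int.le_floor.mpr (mod_cast h2)⟩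
    calc (T.card : ℝ) ≤ (Finset.Icc ⌈x * c - η - σ⌉ ⌊x * d - η + σ⌋).card := mod_cast hsub
      _ ≤ (x * d - η + σ) - (x * c - η - σ) + 1 := Int.card_Icc_ceil_floor_le (by nlinarith)
      _ = x * (d - c) + 2 * σ + 1 := by ring
  have hcover : Icc c d ∩ ⋃ y ∈ F, I y ⊆ ⋃ y ∈ T, I y := by
    rintro z ⟨hzJ, hzE⟩
    obtain ⟨y, hy, hzy⟩ := mem_iUnion₂.mp hzE
    exact mem_iUnion₂.mpr ⟨y, Finset.mem_filter.mpr ⟨hy, z, hzJ, hzy⟩, hzy⟩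
  calc volume (Icc c d ∩ ⋃ y ∈ F, I y) ≤ ∑ y ∈ T, volume (I y) :=
        (measure_mono hcover).trans (measure_biUnion_finset_le T I)
    _ = T.card * ENNReal.ofReal (2 * σ / x) := by
        have hlen : ∀ y, volume (I y) = ENNReal.ofReal (2 * σ / x) := fun y => by
          rw [Real.volume_Icc]
          ring_nf
        simp only [hlen, Finset.sum_const, nsmul_eq_mul]
    _ = ENNReal.ofReal (T.card * (2 * σ / x)) := by
        rw [ENNReal.ofReal_mul (Nat.cast_nonneg _), ENNReal.ofReal_natCast]
    _ ≤ _ := ENNReal.ofReal_le_ofReal (mul_le_mul_of_nonneg_right hcard (by positivity))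

theorem volume_Icc_inter_biUnion_Icc_le_mul {c d x σ η : ℝ} (hcd : 2 ≤ x * (d - c)) (hx : 0 < x)
    (hσ : 0 ≤ σ) (hσ' : σ ≤ 1 / 2) (F : Finset ℕ) :
    volume (Icc c d ∩ ⋃ y ∈ F, Icc (((y : ℝ) + η) / x - σ / x) ((y + η) / x + σ / x))
      ≤ ENNReal.ofReal (4 * σ) * volume (Icc c d) := by
  have hdc : 0 < d - c := pos_of_mul_pos_right (by linarith) hx.le
  refine (volume_Icc_inter_biUnion_Icc_le (by linarith) hx hσ F).trans ?_
  rw [Real.volume_Icc, ← ENNReal.ofReal_mul (by positivity)]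
  refine ENNReal.ofReal_le_ofReal ?_
  calc _ ≤ 2 * (x * (d - c)) * (2 * σ / x) := by gcongr; linarith
    _ = 4 * σ * (d - c) := by field_simp; ring

theorem stmt10_general (l : ℕ) (B : Set ℝ)
    (hB : ∃ S : Finset ℤ, B = ⋃ a ∈ S, Set.Icc ((a:ℝ)/2^l) (((a:ℝ)+1)/2^l))
    (x : ℕ) (hx : 2^(l+1) ≤ x) (σ η : ℝ) (hσ : 0 < σ) (hσ' : σ ≤ 1/2) :
    volume (B ∩ ((⋃ y ∈ Finset.range (x+1),
        Set.Icc (((y:ℝ)+η)/x - σ/x) (((y:ℝ)+η)/x + σ/x)) ∩ Set.Icc 0 1))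
      ≤ ENNReal.ofReal (2^4 * σ) * volume B := by
  obtain ⟨S, rfl⟩ := hB
  have hN : (0 : ℝ) < 2 ^ l := by positivity
  have hxN : 2 * 2 ^ l ≤ (x : ℝ) := by exact_mod_cast pow_succ' 2 l ▸ hx
  refine measure_biUnion_inter_le_mul (pairwise_aedisjoint_Icc_intCast_div hN _)
    (fun a _ => measurableSet_Icc.nullMeasurableSet) fun a _ => ?_
  have hlen : 2 ≤ (x : ℝ) * ((a + 1) / 2 ^ l - a / 2 ^ l) := by
    rw [← sub_div, add_sub_cancel_left, mul_one_div, le_div_iff₀ hN]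
    exact hxN
  calc _ ≤ volume (Icc ((a : ℝ) / 2 ^ l) ((a + 1) / 2 ^ l) ∩
          ⋃ y ∈ Finset.range (x + 1), Icc (((y : ℝ) + η) / x - σ / x) ((y + η) / x + σ / x)) :=
        measure_mono (inter_subset_inter_right _ inter_subset_left)
    _ ≤ ENNReal.ofReal (4 * σ) * volume (Icc ((a : ℝ) / 2 ^ l) ((a + 1) / 2 ^ l)) :=
        volume_Icc_inter_biUnion_Icc_le_mul hlen (by linarith) hσ.le hσ' _
    _ ≤ ENNReal.ofReal (2 ^ 4 * σ) * volume (Icc ((a : ℝ) / 2 ^ l) ((a + 1) / 2 ^ l)) := by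
        gcongr
        norm_num

theorem stmt10 (l : ℕ) (B : Set ℝ) (hB01 : B ⊆ Set.Icc 0 1)
    (hB : ∃ S : Finset ℤ, B = ⋃ a ∈ S, Set.Icc ((a:ℝ)/2^l) (((a:ℝ)+1)/2^l))
    (x : ℕ) (hx : 2^(l+1) ≤ x) (σ η : ℝ) (hσ : 0 < σ) (hσ' : σ ≤ 1/2) :
    volume (B ∩ ((⋃ y ∈ Finset.range (x+1),
        Set.Icc (((y:ℝ)+η)/x - σ/x) (((y:ℝ)+η)/x + σ/x)) ∩ Set.Icc 0 1))
      ≤ ENNReal.ofReal (2^4 * σ) * volume B :=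
  stmt10_general l B hB x hx σ η hσ hσ'
end

section
/- Let γ > 1, 0 ≤ a < 1, A = 4, and define δ(μ, ν) = 2ε·2^{μ−ν}/(ν^{2−a}·(μ+1)^a). Then there exists an absolute constant C such that for all ε > 0 and all sufficiently large X (depending on γ, ε): Σ_{X ≤ ν < 4(X+1)} Σ_{1 ≤ μ ≤ ν + log₂ γ + 2} δ(μ, ν)·max(√(2^{ν−μ}/γ), 2^{ν−μ}, 1) ≤ C·ε/(1−a). -/
/-!
Since γ > 1, the weight max(√(2^{ν−μ}/γ), 2^{ν−μ}, 1) is at most max(2^{ν−μ}, 1), so the μ-th term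
is at most 2ε·max(1, 2^{μ−ν})/(ν^{2−a}(μ+1)^a). For μ ≤ ν this is (2ε/ν^{2−a})(μ+1)^{−a}, and
comparing (μ+1)^{−a} with the increments of t^{1−a}/(1−a) gives Σ_{μ≤ν}(μ+1)^{−a} ≤ 2ν^{1−a}/(1−a).
For μ > ν the term is at most 2ε·2^{μ−ν}/ν², and the geometric sum of these is at most
2ε·2^{⌈log₂ γ⌉+3}/ν² ≤ 32γε/ν². So every inner sum is at most 4ε/((1−a)ν) + 32γε/ν², and the
3X + 4 ≤ 4X values ν ≥ X contribute at most 16ε/(1−a) + 128γε/X ≤ 17ε/(1−a) once X ≥ 128γ.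
-/

open Finset Real

noncomputable def delta (ε a : ℝ) (μ ν : ℕ) : ℝ :=
  2 * ε * (2:ℝ) ^ ((μ:ℤ) - (ν:ℤ)) / ((ν:ℝ) ^ ((2:ℝ) - a) * ((μ:ℝ) + 1) ^ a)

noncomputable def weight (γ : ℝ) (k : ℤ) : ℝ :=
  max (√((2:ℝ) ^ k / γ)) (max ((2:ℝ) ^ k) 1)

lemma weight_le {γ : ℝ} (hγ : 1 ≤ γ) (k : ℤ) : weight γ k ≤ max ((2:ℝ) ^ k) 1 := by
  refine max_le ?_ le_rfl
  set x : ℝ := (2:ℝ) ^ k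
  have hx : 0 ≤ x := by positivity
  calc √(x / γ) ≤ √x := Real.sqrt_le_sqrt (div_le_self hx hγ)
    _ ≤ √(max x 1 ^ 2) := by
        gcongr
        nlinarith [le_max_left x 1, le_max_right x 1]
    _ = max x 1 := Real.sqrt_sq (hx.trans (le_max_left x 1))

section TermBounds

variable {ε γ a : ℝ} {μ ν : ℕ}

lemma delta_mul_weight_le_of_le (hε : 0 ≤ ε) (hγ : 1 ≤ γ) (h : μ ≤ ν) :
    delta ε a μ ν * weight γ ((ν:ℤ) - μ) ≤ 2 * ε / (ν:ℝ) ^ ((2:ℝ) - a) * (((μ:ℝ) + 1) ^ a)⁻¹ := by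
  have hw : weight γ ((ν:ℤ) - μ) ≤ (2:ℝ) ^ ((ν:ℤ) - μ) :=
    (weight_le hγ _).trans (max_le le_rfl (one_le_zpow₀ one_le_two (by omega)))
  have hcancel : (2:ℝ) ^ ((μ:ℤ) - ν) * (2:ℝ) ^ ((ν:ℤ) - μ) = 1 := by
    rw [← zpow_add₀ two_ne_zero]; simp
  calc delta ε a μ ν * weight γ ((ν:ℤ) - μ) ≤ delta ε a μ ν * (2:ℝ) ^ ((ν:ℤ) - μ) := by
        gcongr
        unfold delta; positivity
    _ = 2 * ε / (ν:ℝ) ^ ((2:ℝ) - a) * (((μ:ℝ) + 1) ^ a)⁻¹ := by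
        unfold delta
        rw [div_mul_eq_mul_div, mul_assoc, hcancel]
        ring

lemma delta_mul_weight_le_of_lt (hε : 0 ≤ ε) (hγ : 1 ≤ γ) (ha : 0 ≤ a) (hν : 0 < ν) (h : ν < μ) :
    delta ε a μ ν * weight γ ((ν:ℤ) - μ) ≤ 2 * ε / (ν:ℝ) ^ 2 * (2:ℝ) ^ ((μ:ℤ) - ν) := by
  have hw : weight γ ((ν:ℤ) - μ) ≤ 1 :=
    (weight_le hγ _).trans (max_le (zpow_le_one_of_nonpos₀ one_le_two (by omega)) le_rfl)
  have hνR : (0:ℝ) < ν := by exact_mod_cast hν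
  have hden : (ν:ℝ) ^ 2 ≤ (ν:ℝ) ^ ((2:ℝ) - a) * ((μ:ℝ) + 1) ^ a :=
    calc (ν:ℝ) ^ 2 = (ν:ℝ) ^ ((2:ℝ) - a) * (ν:ℝ) ^ a := by
          rw [← rpow_add hνR, sub_add_cancel, rpow_two]
      _ ≤ (ν:ℝ) ^ ((2:ℝ) - a) * ((μ:ℝ) + 1) ^ a := by
          gcongr
          exact_mod_cast h.le.trans (Nat.le_succ μ)
  calc delta ε a μ ν * weight γ ((ν:ℤ) - μ) ≤ delta ε a μ ν := by
        apply mul_le_of_le_one_right _ hw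
        unfold delta; positivity
    _ ≤ 2 * ε * (2:ℝ) ^ ((μ:ℤ) - ν) / (ν:ℝ) ^ 2 := by
        unfold delta; gcongr
    _ = 2 * ε / (ν:ℝ) ^ 2 * (2:ℝ) ^ ((μ:ℤ) - ν) := by ring

end TermBounds

lemma mul_rpow_sub_one_le_rpow_sub_rpow {x p : ℝ} (hx : 1 ≤ x) (hp0 : 0 ≤ p) (hp1 : p ≤ 1) :
    p * x ^ (p - 1) ≤ x ^ p - (x - 1) ^ p := by
  have hx0 : 0 < x := by linarith
  have hbern : (1 + -x⁻¹) ^ p ≤ 1 + p * -x⁻¹ :=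
    rpow_one_add_le_one_add_mul_self (by simpa using inv_le_one_of_one_le₀ hx) hp0 hp1
  have hsplit : (x - 1) ^ p = x ^ p * (1 + -x⁻¹) ^ p := by
    rw [← mul_rpow hx0.le (by simpa using inv_le_one_of_one_le₀ hx)]
    congr 1; field_simp; ring
  have hpow : x ^ (p - 1) = x ^ p * x⁻¹ := by rw [rpow_sub_one hx0.ne', div_eq_mul_inv]
  rw [hsplit, hpow]
  nlinarith [rpow_nonneg hx0.le p]

lemma sum_Icc_inv_add_one_rpow_le {a : ℝ} (ha : 0 ≤ a) (ha' : a < 1) (N : ℕ) :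
    ∑ μ ∈ Icc 1 N, (((μ:ℝ) + 1) ^ a)⁻¹ ≤ ((N:ℝ) + 1) ^ (1 - a) / (1 - a) := by
  have hp : 0 < 1 - a := by linarith
  induction N with
  | zero => simpa using ha'.le
  | succ n ih =>
    rw [le_div_iff₀ hp] at ih
    rw [sum_Icc_succ_top (by omega), le_div_iff₀ hp]
    have hstep := mul_rpow_sub_one_le_rpow_sub_rpow (x := (n:ℝ) + 1 + 1)
      (by linarith [n.cast_nonneg (α := ℝ)]) hp.le (by linarith)
    rw [show 1 - a - 1 = -a by ring, rpow_neg (by positivity), add_sub_cancel_right] at hstep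
    push_cast
    nlinarith

lemma sum_Icc_inv_add_one_rpow_le_two_mul {a : ℝ} (ha : 0 ≤ a) (ha' : a < 1) {N : ℕ} (hN : 1 ≤ N) :
    ∑ μ ∈ Icc 1 N, (((μ:ℝ) + 1) ^ a)⁻¹ ≤ 2 * (N:ℝ) ^ (1 - a) / (1 - a) := by
  have hNR : (1:ℝ) ≤ N := by exact_mod_cast hN
  refine (sum_Icc_inv_add_one_rpow_le ha ha' N).trans ?_
  gcongr ?_ / _
  calc ((N:ℝ) + 1) ^ (1 - a) ≤ (2 * N) ^ (1 - a) := by gcongr; linarith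
    _ = 2 ^ (1 - a) * (N:ℝ) ^ (1 - a) := mul_rpow zero_le_two (by linarith)
    _ ≤ 2 * (N:ℝ) ^ (1 - a) := by
        gcongr
        exact rpow_le_self_of_one_le one_le_two (by linarith)

lemma sum_Ioc_two_zpow_sub_le (ν m : ℕ) :
    ∑ μ ∈ Ioc ν (ν + m), (2:ℝ) ^ ((μ:ℤ) - ν) ≤ 2 ^ (m + 1) := by
  simp_rw [zpow_sub₀ (two_ne_zero' ℝ), zpow_natCast, ← sum_div]
  rw [div_le_iff₀ (by positivity), ← pow_add]
  calc ∑ μ ∈ Ioc ν (ν + m), (2:ℝ) ^ μ ≤ ∑ μ ∈ range (ν + m + 1), (2:ℝ) ^ μ := by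
        refine sum_le_sum_of_subset_of_nonneg (fun μ hμ => ?_) (fun _ _ _ => by positivity)
        simp only [mem_Ioc, mem_range] at hμ ⊢
        omega
    _ ≤ 2 ^ (m + 1 + ν) := by
        rw [geom_sum_eq (by norm_num), show m + 1 + ν = ν + m + 1 by ring]
        norm_num

lemma pow_ceil_logb_le {b x : ℝ} (hb : 1 < b) (hx : 1 ≤ x) : b ^ ⌈logb b x⌉₊ ≤ b * x := by
  have hlog : 0 ≤ logb b x := logb_nonneg hb hx
  calc b ^ ⌈logb b x⌉₊ = b ^ (⌈logb b x⌉₊ : ℝ) := (rpow_natCast b _).symm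
    _ ≤ b ^ (1 + logb b x) := by
        gcongr
        · exact hb.le
        · linarith [Nat.ceil_lt_add_one hlog]
    _ = b * x := by rw [rpow_add (by linarith), rpow_one, rpow_logb (by linarith) hb.ne' (by linarith)]

lemma sum_delta_mul_weight_le {ε γ a : ℝ} (hε : 0 ≤ ε) (hγ : 1 ≤ γ) (ha : 0 ≤ a) (ha' : a < 1)
    {ν : ℕ} (hν : 0 < ν) (m : ℕ) :
    ∑ μ ∈ Icc 1 (ν + m), delta ε a μ ν * weight γ ((ν:ℤ) - μ)
      ≤ 4 * ε / ((1 - a) * ν) + 2 * ε / (ν:ℝ) ^ 2 * 2 ^ (m + 1) := by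
  have hνR : (0:ℝ) < ν := by exact_mod_cast hν
  have hIcc : ∀ n, Icc 1 n = Ioc 0 n := Icc_add_one_left_eq_Ioc 0
  rw [hIcc, ← sum_Ioc_consecutive _ (Nat.zero_le ν) (Nat.le_add_right ν m)]
  gcongr ?_ + ?_
  · calc ∑ μ ∈ Ioc 0 ν, delta ε a μ ν * weight γ ((ν:ℤ) - μ)
          ≤ ∑ μ ∈ Icc 1 ν, 2 * ε / (ν:ℝ) ^ ((2:ℝ) - a) * (((μ:ℝ) + 1) ^ a)⁻¹ := by
            rw [← hIcc]
            exact sum_le_sum fun μ hμ => delta_mul_weight_le_of_le hε hγ (mem_Icc.1 hμ).2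
      _ ≤ 2 * ε / (ν:ℝ) ^ ((2:ℝ) - a) * (2 * (ν:ℝ) ^ (1 - a) / (1 - a)) := by
            rw [← mul_sum]
            gcongr
            exact sum_Icc_inv_add_one_rpow_le_two_mul ha ha' hν
      _ = 4 * ε / ((1 - a) * ν) := by
            rw [show (2:ℝ) - a = (1 - a) + 1 by ring, rpow_add hνR, rpow_one]
            have : (ν:ℝ) ^ (1 - a) ≠ 0 := (rpow_pos_of_pos hνR _).ne'
            field_simp
            ring
  · calc ∑ μ ∈ Ioc ν (ν + m), delta ε a μ ν * weight γ ((ν:ℤ) - μ)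
          ≤ ∑ μ ∈ Ioc ν (ν + m), 2 * ε / (ν:ℝ) ^ 2 * (2:ℝ) ^ ((μ:ℤ) - ν) :=
            sum_le_sum fun μ hμ => delta_mul_weight_le_of_lt hε hγ ha hν (mem_Ioc.1 hμ).1
      _ ≤ 2 * ε / (ν:ℝ) ^ 2 * 2 ^ (m + 1) := by
            rw [← mul_sum]
            gcongr
            exact sum_Ioc_two_zpow_sub_le ν m

lemma card_Ico_le_four_mul {X : ℕ} (hX : 4 ≤ X) : ((Ico X (4 * (X + 1))).card : ℝ) ≤ 4 * X := by
  rw [Nat.card_Ico, show 4 * (X + 1) - X = 3 * X + 4 by omega]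
  have hXR : (4:ℝ) ≤ X := by exact_mod_cast hX
  push_cast
  linarith

theorem stmt14 (γ : ℝ) (hγ : 1 < γ) (a : ℝ) (ha : 0 ≤ a) (ha' : a < 1) :
    ∃ C > (0:ℝ), ∀ ε : ℝ, 0 < ε → ∃ X₀ : ℕ, ∀ X : ℕ, X₀ ≤ X →
      ∑ ν ∈ Finset.Ico X (4*(X+1)),
        ∑ μ ∈ Finset.Icc 1 (ν + ⌈Real.logb 2 γ⌉₊ + 2),
          (2 * ε * (2:ℝ)^((μ:ℤ)-(ν:ℤ)) / ((ν:ℝ)^((2:ℝ)-a) * ((μ:ℝ)+1)^a)) *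
            max (Real.sqrt ((2:ℝ)^((ν:ℤ)-(μ:ℤ)) / γ))
              (max ((2:ℝ)^((ν:ℤ)-(μ:ℤ))) 1)
        ≤ C * ε / (1-a) := by
  refine ⟨17, by norm_num, fun ε hε => ⟨max 4 ⌈128 * γ⌉₊, fun X hX => ?_⟩⟩
  set L := ⌈logb 2 γ⌉₊
  have hX4 : 4 ≤ X := (le_max_left _ _).trans hX
  have hXγ : 128 * γ ≤ X := Nat.ceil_le.1 ((le_max_right _ _).trans hX)
  have hp : 0 < 1 - a := by linarith
  have hL : (2:ℝ) ^ (L + 2 + 1) ≤ 16 * γ := by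
    have := pow_ceil_logb_le one_lt_two hγ.le
    rw [pow_add, pow_add]
    linarith
  have hinner : ∀ ν ∈ Ico X (4 * (X + 1)),
      ∑ μ ∈ Icc 1 (ν + L + 2), delta ε a μ ν * weight γ ((ν:ℤ) - μ)
        ≤ 4 * ε / ((1 - a) * X) + 2 * ε / (X:ℝ) ^ 2 * (16 * γ) := by
    intro ν hν
    have hXν : X ≤ ν := (mem_Ico.1 hν).1
    rw [add_assoc]
    refine (sum_delta_mul_weight_le hε.le hγ.le ha ha' (by omega) _).trans ?_
    gcongr
  calc _ ≤ (Ico X (4 * (X + 1))).card • (4 * ε / ((1 - a) * X) + 2 * ε / (X:ℝ) ^ 2 * (16 * γ)) :=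
        sum_le_card_nsmul _ _ _ hinner
    _ ≤ 4 * X * (4 * ε / ((1 - a) * X) + 2 * ε / (X:ℝ) ^ 2 * (16 * γ)) := by
        rw [nsmul_eq_mul]
        gcongr
        exact card_Ico_le_four_mul hX4
    _ = 16 * ε / (1 - a) + 128 * γ / X * ε := by field_simp; ring
    _ ≤ 16 * ε / (1 - a) + 1 * ε := by
        gcongr
        rw [div_le_one (by linarith)]
        exact hXγ
    _ ≤ 16 * ε / (1 - a) + ε / (1 - a) := by
        rw [one_mul]
        gcongr
        exact le_div_self hε.le hp (by linarith)
    _ = 17 * ε / (1 - a) := by ring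
end
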